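/- Let g ∈ G_n and h ∈ G_k, and let θ ∈ K_{n+k} be any element whose underlying permutation of ℕ sends i to n + i for all 0 ≤ i < k. Then: (a) the element g · θ h θ⁻¹ lies in G_{n+k}, and its K_{n+k}-conjugacy class does not depend on the choice of θ; and (b) for every N ∈ ℕ, the difference A_N[n,g] * A_N[k,h] − A_N[n+k, g · θ h θ⁻¹] lies in the complex linear span of the elements A_N[m,r] with m ≤ n + k − 1 and r ∈ G_m. -/

import Mathlib

/-!
Write `S(r) = ∑_{σ ∈ K_N} σ r σ⁻¹`, so that `A_N[j,r] = S(r) / (N-j)!`. Substituting `τ = σπ`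
in the double sum gives `A_N[n,g] A_N[k,h] = ∑_{π ∈ K_N} S(g · πhπ⁻¹) / ((N-n)! (N-k)!)`.
A permutation `μ ∈ K_N` fixing `0, …, n-1` commutes with `g` and leaves `S` unchanged; choosing it
to push the levels `π(i) ≥ n` (`i < k`) down onto `n, n+1, …` turns the term of `π` into `S(r)` with
`r ∈ G_{n+d}`, where `d` counts the `i < k` with `π(i) ≥ n`. When `d = k` one can take `μπ` to agree
with `θ` below `k`, and since `h` commutes with every permutation fixing `0, …, k-1`, then
`r = g · θhθ⁻¹` (this also gives part (a)). There are `(N-n)_k (N-k)!` such `π`, which is exactly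
the coefficient `1 / (N-n-k)!` of `A_N[n+k, g · θhθ⁻¹]`; every other term has `d < k`.
-/

noncomputable section

/-- Embedding of permutations of `ℕ` into permutations of `V = X ⊕ (I × ℕ)`,
acting trivially on `X` and on the first factor of `I × ℕ`.  It restricts to an
embedding of `S_∞` into `S(V)`. -/
def embNat (I X : Type*) (τ : Equiv.Perm ℕ) : Equiv.Perm (X ⊕ I × ℕ) :=
  Equiv.sumCongr (Equiv.refl X) (Equiv.prodCongr (Equiv.refl I) τ)

/-- `τ` fixes every `m ≥ n`, i.e. `τ` belongs to the subgroup `S_n ≤ S_∞`. -/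
def fixesFrom (n : ℕ) (τ : Equiv.Perm ℕ) : Prop := ∀ m : ℕ, n ≤ m → τ m = m

/-- `G_n`: the set of elements of `G_∞` fixing every point of `V ∖ V_n`. -/
def Gset {I X : Type*} (Ginf : Subgroup (Equiv.Perm (X ⊕ I × ℕ))) (n : ℕ) :
    Set (Equiv.Perm (X ⊕ I × ℕ)) :=
  {g | g ∈ Ginf ∧ ∀ (i : I) (m : ℕ), n ≤ m → g (Sum.inr (i, m)) = Sum.inr (i, m)}

/-- `K_n`-conjugacy of elements of `S(V)`:  `g' = κ g κ⁻¹` for some `κ ∈ K_n`,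
where `K_n` is the image of `S_n` in `S(V)`. -/
def Kconj {I X : Type*} (n : ℕ) (g g' : Equiv.Perm (X ⊕ I × ℕ)) : Prop :=
  ∃ τ : Equiv.Perm ℕ, fixesFrom n τ ∧ g' = embNat I X τ * g * (embNat I X τ)⁻¹

/-- A permutation of `Fin N` extended to `ℕ` and then to `V`; these elements
form exactly the subgroup `K_N ≤ S(V)`. -/
def embFin (I X : Type*) (N : ℕ) (σ : Equiv.Perm (Fin N)) : Equiv.Perm (X ⊕ I × ℕ) :=
  embNat I X (σ.extendDomain Fin.equivSubtype)

/-- The element `A_N[j,g] = (1/(N−j)!) Σ_{τ ∈ K_N} τ g τ⁻¹` of `ℂ[G_∞]`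
(and `A_N[j,g] = 0` for `j > N`). -/
def AN (I X : Type*) (N j : ℕ) (g : Equiv.Perm (X ⊕ I × ℕ)) :
    MonoidAlgebra ℂ (Equiv.Perm (X ⊕ I × ℕ)) :=
  if j ≤ N then
    ((Nat.factorial (N - j) : ℂ))⁻¹ •
      ∑ σ : Equiv.Perm (Fin N),
        MonoidAlgebra.of ℂ (Equiv.Perm (X ⊕ I × ℕ))
          (embFin I X N σ * g * (embFin I X N σ)⁻¹)
  else 0

open Equiv Finset
open scoped Nat

section ConjSum

variable (R : Type*) {K G : Type*} [Semiring R] [Group K] [Fintype K] [Group G]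

def conjSum (ψ : K →* G) (g : G) : MonoidAlgebra R G :=
  ∑ σ, MonoidAlgebra.of R G (ψ σ * g * (ψ σ)⁻¹)

variable {R} (ψ : K →* G)

theorem conjSum_conj (κ : K) (g : G) : conjSum R ψ (ψ κ * g * (ψ κ)⁻¹) = conjSum R ψ g :=
  Fintype.sum_equiv (Equiv.mulRight κ) _ _ fun σ => by
    refine congrArg _ ?_
    simp only [coe_mulRight, map_mul, mul_inv_rev]
    group

theorem conjSum_mul_conjSum (g h : G) :
    conjSum R ψ g * conjSum R ψ h = ∑ π, conjSum R ψ (g * (ψ π * h * (ψ π)⁻¹)) := by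
  simp only [conjSum, sum_mul_sum]
  conv_rhs => rw [sum_comm]
  refine sum_congr rfl fun σ _ => Fintype.sum_equiv (Equiv.mulLeft σ⁻¹) _ _ fun τ => ?_
  rw [← map_mul]
  refine congrArg _ ?_
  simp only [coe_mulLeft, map_mul, map_inv]
  group

end ConjSum

section PermExtension

variable {α β : Type*}

theorem exists_perm_apply_embedding [Finite α] (u v : α ↪ β) :
    ∃ π : Perm β, ∀ a, π (u a) = v a := by
  classical
  let e := (Equiv.ofInjective u u.injective).symm.trans (Equiv.ofInjective v v.injective)
  have : Finite {b | b ∈ Set.range u} := Set.finite_range u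
  refine ⟨e.extendSubtype, fun a => ?_⟩
  rw [extendSubtype_apply_of_mem e _ ⟨a, rfl⟩]
  simp [e, Equiv.ofInjective_symm_apply]

theorem exists_perm_ofSubtype_apply_embedding [Finite α] {p : β → Prop} [DecidablePred p]
    (u v : α ↪ Subtype p) : ∃ μ : Perm β, (∀ b, ¬ p b → μ b = b) ∧ ∀ a, μ (u a) = v a := by
  obtain ⟨ρ, hρ⟩ := exists_perm_apply_embedding u v
  exact ⟨Perm.ofSubtype ρ, fun b hb => Perm.ofSubtype_apply_of_not_mem ρ hb,
    fun a => by rw [Perm.ofSubtype_apply_coe, hρ]⟩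

variable [Fintype α] [Fintype β] [DecidableEq β]

theorem card_perm_apply_embedding (u v : α ↪ β) :
    Fintype.card {π : Perm β // ∀ a, π (u a) = v a}
      = (Fintype.card β - Fintype.card α)! := by
  obtain ⟨π₀, hπ₀⟩ := exists_perm_apply_embedding u v
  have hstab : {π : Perm β // ∀ a, π (u a) = v a}
      ≃ {σ : Perm β // ∀ b, ¬ b ∉ Set.range u → σ b = b} :=
    (Equiv.mulLeft π₀⁻¹).subtypeEquiv fun π => by
      simp only [Set.mem_range, not_not, forall_exists_index, forall_apply_eq_imp_iff,
        coe_mulLeft, Perm.mul_apply, ← hπ₀, Perm.inv_eq_iff_eq]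
  rw [Fintype.card_congr (hstab.trans (Perm.subtypeEquivSubtypePerm _).symm), Fintype.card_perm,
    Fintype.card_subtype_compl, Set.card_range_of_injective u.injective]

theorem card_perm_forall_apply_embedding (u : α ↪ β) (p : β → Prop) [DecidablePred p] :
    Fintype.card {π : Perm β // ∀ a, p (π (u a))}
      = Fintype.card (α ↪ Subtype p) * (Fintype.card β - Fintype.card α)! := by
  let res : {π : Perm β // ∀ a, p (π (u a))} → (α ↪ Subtype p) := fun π =>
    ⟨fun a => ⟨π.1 (u a), π.2 a⟩, fun a b hab => by simpa using congrArg Subtype.val hab⟩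
  have hfiber (ι : α ↪ Subtype p) :
      {π // res π = ι} ≃ {π : Perm β // ∀ a, π (u a) = ι.trans (.subtype p) a} :=
    (Equiv.subtypeEquivRight fun π => by simp only [DFunLike.ext_iff, Subtype.ext_iff]; rfl).trans
      (Equiv.subtypeSubtypeEquivSubtype fun {π} hπ a => hπ a ▸ (ι a).2)
  rw [Fintype.card_congr (Equiv.sigmaFiberEquiv res).symm, Fintype.card_sigma]
  simp only [Fintype.card_congr (hfiber _), card_perm_apply_embedding, sum_const, card_univ,
    smul_eq_mul]

end PermExtension

section Levels

variable {I X : Type*}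

def FixesLevelsFrom (k : ℕ) (h : Perm (X ⊕ I × ℕ)) : Prop :=
  ∀ (i : I) (m : ℕ), k ≤ m → h (Sum.inr (i, m)) = Sum.inr (i, m)

theorem FixesLevelsFrom.mono {k m : ℕ} {h : Perm (X ⊕ I × ℕ)} (hh : FixesLevelsFrom k h)
    (hkm : k ≤ m) : FixesLevelsFrom m h :=
  fun i m' hm' => hh i m' (hkm.trans hm')

theorem FixesLevelsFrom.mul {k : ℕ} {g h : Perm (X ⊕ I × ℕ)} (hg : FixesLevelsFrom k g)
    (hh : FixesLevelsFrom k h) : FixesLevelsFrom k (g * h) :=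
  fun i m hm => by rw [Perm.mul_apply, hh i m hm, hg i m hm]

variable (I X) in
def embNatHom : Perm ℕ →* Perm (X ⊕ I × ℕ) where
  toFun := embNat I X
  map_one' := by ext (x | ⟨i, m⟩) <;> rfl
  map_mul' σ τ := by ext (x | ⟨i, m⟩) <;> rfl

variable (I X) in
def embFinHom (N : ℕ) : Perm (Fin N) →* Perm (X ⊕ I × ℕ) :=
  (embNatHom I X).comp (Perm.extendDomainHom Fin.equivSubtype)

theorem embNat_one : embNat I X 1 = 1 := map_one (embNatHom I X)

theorem embNat_mul (σ τ : Perm ℕ) : embNat I X (σ * τ) = embNat I X σ * embNat I X τ :=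
  map_mul (embNatHom I X) σ τ

theorem embNat_inv (τ : Perm ℕ) : embNat I X τ⁻¹ = (embNat I X τ)⁻¹ := map_inv (embNatHom I X) τ

theorem embFin_mul {N : ℕ} (σ τ : Perm (Fin N)) :
    embFin I X N (σ * τ) = embFin I X N σ * embFin I X N τ :=
  map_mul (embFinHom I X N) σ τ

theorem disjoint_embNat {k : ℕ} {ρ : Perm ℕ} {h : Perm (X ⊕ I × ℕ)} (hρ : ∀ j < k, ρ j = j)
    (hh : FixesLevelsFrom k h) : (embNat I X ρ).Disjoint h := by
  rintro (x | ⟨i, m⟩)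
  · exact Or.inl rfl
  · rcases lt_or_ge m k with hm | hm
    · exact Or.inl (congrArg (fun m => Sum.inr (i, m)) (hρ m hm))
    · exact Or.inr (hh i m hm)

theorem embNat_conj_eq_of_eqOn {k : ℕ} {ρ ρ' : Perm ℕ} {h : Perm (X ⊕ I × ℕ)}
    (hh : FixesLevelsFrom k h) (hρ : ∀ j < k, ρ j = ρ' j) :
    embNat I X ρ * h * (embNat I X ρ)⁻¹ = embNat I X ρ' * h * (embNat I X ρ')⁻¹ := by
  have hcomm : Commute (embNat I X (ρ'⁻¹ * ρ)) h :=
    (disjoint_embNat (fun j hj => by rw [Perm.mul_apply, hρ j hj]; exact ρ'.symm_apply_apply j)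
      hh).commute
  have hsplit : embNat I X ρ = embNat I X ρ' * embNat I X (ρ'⁻¹ * ρ) := by
    rw [← embNat_mul, mul_inv_cancel_left]
  conv_rhs => rw [← hcomm.mul_inv_cancel]
  rw [hsplit]
  group

theorem FixesLevelsFrom.embNat_conj {k m : ℕ} {ρ : Perm ℕ} {h : Perm (X ⊕ I × ℕ)}
    (hh : FixesLevelsFrom k h) (hρ : ∀ j < k, ρ j < m) :
    FixesLevelsFrom m (embNat I X ρ * h * (embNat I X ρ)⁻¹) := by
  intro i m' hm'
  have hk : k ≤ ρ⁻¹ m' := by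
    by_contra! hlt
    have := hρ _ hlt
    simp only [Perm.coe_inv, Equiv.apply_symm_apply] at this
    omega
  rw [← embNat_inv]
  show embNat I X ρ (h (Sum.inr (i, ρ⁻¹ m'))) = _
  rw [hh i _ hk]
  exact congrArg (fun m => Sum.inr (i, m)) (ρ.apply_symm_apply m')

variable {Ginf : Subgroup (Perm (X ⊕ I × ℕ))}

theorem embNat_mem_of_fixesFrom
    (hGS : ∀ τ : Perm ℕ, {m : ℕ | τ m ≠ m}.Finite → embNat I X τ ∈ Ginf) {N : ℕ} {τ : Perm ℕ}
    (hτ : fixesFrom N τ) : embNat I X τ ∈ Ginf :=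
  hGS τ ((Set.finite_Iio N).subset fun m hm => not_le.1 fun hNm => hm (hτ m hNm))

theorem mul_embNat_conj_mem_Gset
    (hGS : ∀ τ : Perm ℕ, {m : ℕ | τ m ≠ m}.Finite → embNat I X τ ∈ Ginf)
    {n k m N : ℕ} {g h : Perm (X ⊕ I × ℕ)} {ρ : Perm ℕ}
    (hg : g ∈ Gset Ginf n) (hh : h ∈ Gset Ginf k) (hρN : fixesFrom N ρ) (hρ : ∀ j < k, ρ j < m)
    (hnm : n ≤ m) : g * (embNat I X ρ * h * (embNat I X ρ)⁻¹) ∈ Gset Ginf m := by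
  have hρG := embNat_mem_of_fixesFrom hGS hρN
  exact ⟨mul_mem hg.1 (mul_mem (mul_mem hρG hh.1) (inv_mem hρG)),
    FixesLevelsFrom.mul (FixesLevelsFrom.mono hg.2 hnm) (FixesLevelsFrom.embNat_conj hh.2 hρ)⟩

end Levels

section FinPerm

variable {N n k : ℕ}

theorem extendDomain_finEquivSubtype_of_lt (σ : Perm (Fin N)) {m : ℕ} (hm : m < N) :
    σ.extendDomain Fin.equivSubtype m = σ ⟨m, hm⟩ := by
  rw [Perm.extendDomain_apply_subtype σ Fin.equivSubtype hm]
  rfl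

theorem fixesFrom_extendDomain_finEquivSubtype (σ : Perm (Fin N)) :
    fixesFrom N (σ.extendDomain Fin.equivSubtype) :=
  fun _ hm => Perm.extendDomain_apply_not_subtype _ _ (not_lt.2 hm)

theorem extendDomain_finEquivSubtype_eq_of_lt {σ : Perm (Fin N)}
    (hσ : ∀ a : Fin N, (a : ℕ) < n → σ a = a) {m : ℕ} (hm : m < n) :
    σ.extendDomain Fin.equivSubtype m = m := by
  rcases lt_or_ge m N with hmN | hmN
  · rw [extendDomain_finEquivSubtype_of_lt σ hmN, hσ _ hm]
  · exact fixesFrom_extendDomain_finEquivSubtype σ m hmN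

theorem card_fin_subtype_le_val : Fintype.card {a : Fin N // n ≤ (a : ℕ)} = N - n := by
  simp only [← not_lt]
  rw [Fintype.card_subtype_compl, Fintype.card_subtype, Fin.card_filter_val_lt, Fintype.card_fin]
  omega

theorem add_card_le_of_forall_le (hn : n ≤ N) (D : Finset (Fin N))
    (hD : ∀ a ∈ D, n ≤ (a : ℕ)) : n + #D ≤ N := by
  have := Fintype.card_le_of_embedding
    (⟨fun a : D => (⟨a, hD a a.2⟩ : {a : Fin N // n ≤ (a : ℕ)}),
      fun a b hab => Subtype.ext (congrArg Subtype.val hab :)⟩)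
  rw [Fintype.card_coe, card_fin_subtype_le_val] at this
  omega

theorem exists_perm_fin_fix_lt_image_lt (hn : n ≤ N) (D : Finset (Fin N))
    (hD : ∀ a ∈ D, n ≤ (a : ℕ)) :
    ∃ μ : Perm (Fin N), (∀ a : Fin N, (a : ℕ) < n → μ a = a) ∧ ∀ a ∈ D, (μ a : ℕ) < n + #D := by
  have hnD := add_card_le_of_forall_le hn D hD
  let u : Fin #D ↪ {a : Fin N // n ≤ (a : ℕ)} :=
    ⟨fun j => ⟨D.equivFin.symm j, hD _ (D.equivFin.symm j).2⟩,
      fun i j hij => by simpa [Subtype.ext_iff] using hij⟩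
  let v : Fin #D ↪ {a : Fin N // n ≤ (a : ℕ)} :=
    ⟨fun j => ⟨⟨n + j, by omega⟩, by simp⟩, fun i j hij => Fin.ext (by simpa using hij)⟩
  obtain ⟨μ, hμn, hμ⟩ := exists_perm_ofSubtype_apply_embedding u v
  refine ⟨μ, fun a ha => hμn a (by omega), fun a ha => ?_⟩
  have := hμ (D.equivFin ⟨a, ha⟩)
  have hμa := hμ (D.equivFin ⟨a, ha⟩)
  change μ (D.equivFin.symm (D.equivFin ⟨a, ha⟩)) = ⟨n + D.equivFin ⟨a, ha⟩, _⟩ at hμa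
  rw [Equiv.symm_apply_apply] at hμa
  rw [hμa]
  exact Nat.add_lt_add_left (D.equivFin ⟨a, ha⟩).isLt n

theorem card_perm_fin_forall_le_apply_castLE (hk : k ≤ N) :
    #{π : Perm (Fin N) | ∀ i : Fin k, n ≤ (π (Fin.castLE hk i) : ℕ)}
      = (N - n).descFactorial k * (N - k)! := by
  have := card_perm_forall_apply_embedding (Fin.castLEEmb hk) (fun a : Fin N => n ≤ (a : ℕ))
  rw [Fintype.card_embedding_eq, card_fin_subtype_le_val, Fintype.card_fin, Fintype.card_fin,
    Fintype.card_subtype] at this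
  rw [← this]
  rfl

end FinPerm

section GroupAlgebra

variable {I X : Type*} {N : ℕ}

theorem AN_of_le {j : ℕ} (r : Perm (X ⊕ I × ℕ)) (hj : j ≤ N) :
    AN I X N j r = ((N - j)! : ℂ)⁻¹ • conjSum ℂ (embFinHom I X N) r := by
  rw [AN, if_pos hj]
  rfl

theorem AN_of_lt {j : ℕ} (r : Perm (X ⊕ I × ℕ)) (hj : N < j) : AN I X N j r = 0 := by
  rw [AN, if_neg (not_le.2 hj)]

theorem conjSum_eq_factorial_smul_AN {j : ℕ} (r : Perm (X ⊕ I × ℕ)) (hj : j ≤ N) :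
    conjSum ℂ (embFinHom I X N) r = ((N - j)! : ℂ) • AN I X N j r := by
  rw [AN_of_le r hj, smul_smul, mul_inv_cancel₀ (Nat.cast_ne_zero.2 (Nat.factorial_ne_zero _)),
    one_smul]

theorem AN_add_eq_smul_conjSum {n : ℕ} (k : ℕ) (r : Perm (X ⊕ I × ℕ)) (hn : n ≤ N) :
    AN I X N (n + k) r
      = (((N - n).descFactorial k : ℂ) / (N - n)!) • conjSum ℂ (embFinHom I X N) r := by
  rcases le_or_gt (n + k) N with hnk | hnk
  · rw [AN_of_le r hnk]
    congr 1
    have hfac := Nat.factorial_mul_descFactorial (show k ≤ N - n by omega)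
    have hdesc : ((N - n).descFactorial k : ℂ) ≠ 0 :=
      Nat.cast_ne_zero.2 (Nat.descFactorial_eq_zero_iff_lt.not.2 (by omega))
    rw [Nat.sub_sub] at hfac
    rw [← hfac, Nat.cast_mul, div_mul_cancel_right₀ hdesc]
  · rw [AN_of_lt r hnk, Nat.descFactorial_of_lt (by omega), Nat.cast_zero, zero_div, zero_smul]

theorem AN_mul_AN {n k : ℕ} (hn : n ≤ N) (hk : k ≤ N) (g h : Perm (X ⊕ I × ℕ)) :
    AN I X N n g * AN I X N k h = (((N - n)! * (N - k)! : ℂ))⁻¹ •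
      ∑ π, conjSum ℂ (embFinHom I X N) (g * (embFin I X N π * h * (embFin I X N π)⁻¹)) := by
  rw [AN_of_le g hn, AN_of_le h hk, smul_mul_smul_comm, conjSum_mul_conjSum, mul_inv]
  rfl

theorem conjSum_mul_conj_embFin_mul_left {n : ℕ} {g h : Perm (X ⊕ I × ℕ)}
    (hg : FixesLevelsFrom n g) {μ : Perm (Fin N)} (hμ : ∀ a : Fin N, (a : ℕ) < n → μ a = a)
    (π : Perm (Fin N)) :
    conjSum ℂ (embFinHom I X N) (g * (embFin I X N π * h * (embFin I X N π)⁻¹))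
      = conjSum ℂ (embFinHom I X N)
          (g * (embFin I X N (μ * π) * h * (embFin I X N (μ * π))⁻¹)) := by
  have hcomm : Commute (embFin I X N μ) g :=
    (disjoint_embNat (fun _ hj => extendDomain_finEquivSubtype_eq_of_lt hμ hj) hg).commute
  rw [← conjSum_conj _ μ]
  congr 1
  show embFin I X N μ * _ * (embFin I X N μ)⁻¹ = _
  simp only [embFin_mul, mul_inv_rev, mul_assoc, hcomm.left_comm]

theorem conjSum_mul_conj_embFin_eq_of_forall_le {n k : ℕ} {g h : Perm (X ⊕ I × ℕ)}
    (hg : FixesLevelsFrom n g) (hh : FixesLevelsFrom k h) {θ : Perm ℕ}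
    (hθ : ∀ i < k, θ i = n + i) (hn : n ≤ N) (hk : k ≤ N) {π : Perm (Fin N)}
    (hπ : ∀ i : Fin k, n ≤ (π (Fin.castLE hk i) : ℕ)) :
    conjSum ℂ (embFinHom I X N) (g * (embFin I X N π * h * (embFin I X N π)⁻¹))
      = conjSum ℂ (embFinHom I X N) (g * (embNat I X θ * h * (embNat I X θ)⁻¹)) := by
  let u : Fin k ↪ {a : Fin N // n ≤ (a : ℕ)} :=
    ⟨fun i => ⟨π (Fin.castLE hk i), hπ i⟩, fun i j hij =>
      Fin.castLE_injective hk (π.injective (congrArg Subtype.val hij :))⟩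
  have hnk : n + k ≤ N := by
    have := Fintype.card_le_of_embedding u
    rw [Fintype.card_fin, card_fin_subtype_le_val] at this
    omega
  let v : Fin k ↪ {a : Fin N // n ≤ (a : ℕ)} :=
    ⟨fun i => ⟨⟨n + i, by omega⟩, by simp⟩, fun i j hij => Fin.ext (by simpa using hij)⟩
  obtain ⟨μ, hμn, hμ⟩ := exists_perm_ofSubtype_apply_embedding u v
  rw [conjSum_mul_conj_embFin_mul_left hg (μ := μ) (fun a ha => hμn a (by omega)) π]
  congr 2
  refine embNat_conj_eq_of_eqOn hh fun j hj => ?_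
  have hμj := hμ ⟨j, hj⟩
  change μ (π ⟨j, _⟩) = ⟨n + j, _⟩ at hμj
  rw [extendDomain_finEquivSubtype_of_lt _ (by omega), Perm.mul_apply, hμj, hθ j hj]

end GroupAlgebra

section Product

variable {I X : Type*} {Ginf : Subgroup (Perm (X ⊕ I × ℕ))}

variable (Ginf) in
def spanBelow (N m : ℕ) : Submodule ℂ (MonoidAlgebra ℂ (Perm (X ⊕ I × ℕ))) :=
  Submodule.span ℂ {x | ∃ j : ℕ, j < m ∧ ∃ r ∈ Gset Ginf j, x = AN I X N j r}

theorem conjSum_mul_conj_embFin_mem_spanBelow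
    (hGS : ∀ τ : Perm ℕ, {m : ℕ | τ m ≠ m}.Finite → embNat I X τ ∈ Ginf)
    {n k N : ℕ} {g h : Perm (X ⊕ I × ℕ)} (hg : g ∈ Gset Ginf n) (hh : h ∈ Gset Ginf k)
    (hn : n ≤ N) (hk : k ≤ N) {π : Perm (Fin N)}
    (hπ : ¬ ∀ i : Fin k, n ≤ (π (Fin.castLE hk i) : ℕ)) :
    conjSum ℂ (embFinHom I X N) (g * (embFin I X N π * h * (embFin I X N π)⁻¹))
      ∈ spanBelow Ginf N (n + k) := by
  obtain ⟨i₀, hi₀⟩ := not_forall.1 hπ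
  set D : Finset (Fin N) := {a ∈ univ.image fun i => π (Fin.castLE hk i) | n ≤ (a : ℕ)}
  have hDn : ∀ a ∈ D, n ≤ (a : ℕ) := fun a ha => (mem_filter.1 ha).2
  have hDk : #D < k :=
    calc #D < #(univ.image fun i => π (Fin.castLE hk i)) :=
          card_lt_card (filter_ssubset.2
            ⟨_, mem_image.2 ⟨i₀, mem_univ _, rfl⟩, hi₀⟩)
      _ ≤ k := card_image_le.trans (by simp)
  obtain ⟨μ, hμn, hμD⟩ := exists_perm_fin_fix_lt_image_lt hn D hDn
  have hρ : ∀ j < k, (μ * π).extendDomain Fin.equivSubtype j < n + #D := by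
    intro j hj
    rw [extendDomain_finEquivSubtype_of_lt _ (by omega), Perm.mul_apply]
    by_cases hπj : n ≤ (π ⟨j, by omega⟩ : ℕ)
    · exact hμD _ (mem_filter.2 ⟨mem_image.2 ⟨⟨j, hj⟩, mem_univ _, rfl⟩, hπj⟩)
    · rw [hμn _ (not_le.1 hπj)]
      omega
  rw [conjSum_mul_conj_embFin_mul_left hg.2 hμn π,
    conjSum_eq_factorial_smul_AN _ (add_card_le_of_forall_le hn D hDn)]
  exact Submodule.smul_mem _ _ (Submodule.subset_span ⟨n + #D, by omega, _,
    mul_embNat_conj_mem_Gset hGS hg hh (fixesFrom_extendDomain_finEquivSubtype _) hρ le_self_add,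
    rfl⟩)

theorem AN_mul_AN_sub_AN_mem_spanBelow
    (hGS : ∀ τ : Perm ℕ, {m : ℕ | τ m ≠ m}.Finite → embNat I X τ ∈ Ginf)
    {n k : ℕ} {g h : Perm (X ⊕ I × ℕ)} (hg : g ∈ Gset Ginf n) (hh : h ∈ Gset Ginf k)
    (N : ℕ) {θ : Perm ℕ} (hθ : ∀ i < k, θ i = n + i) :
    AN I X N n g * AN I X N k h - AN I X N (n + k) (g * (embNat I X θ * h * (embNat I X θ)⁻¹))
      ∈ spanBelow Ginf N (n + k) := by
  rcases lt_or_ge N n with hn | hn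
  · rw [AN_of_lt g hn, AN_of_lt (j := n + k) _ (by omega), zero_mul, sub_zero]
    exact zero_mem _
  rcases lt_or_ge N k with hk | hk
  · rw [AN_of_lt h hk, AN_of_lt (j := n + k) _ (by omega), mul_zero, sub_zero]
    exact zero_mem _
  have hcoef : (((N - n)! * (N - k)! : ℂ))⁻¹ * ((N - n).descFactorial k * (N - k)! : ℕ)
      = (N - n).descFactorial k / (N - n)! := by
    have : ((N - k)! : ℂ) ≠ 0 := Nat.cast_ne_zero.2 (Nat.factorial_ne_zero _)
    push_cast
    field_simp
  rw [AN_mul_AN hn hk, ← sum_filter_add_sum_filter_not univ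
      (fun π : Perm (Fin N) => ∀ i : Fin k, n ≤ (π (Fin.castLE hk i) : ℕ)),
    sum_congr rfl fun π hπ => conjSum_mul_conj_embFin_eq_of_forall_le hg.2 hh.2 hθ hn hk
      (mem_filter.1 hπ).2,
    sum_const, card_perm_fin_forall_le_apply_castLE hk, ← Nat.cast_smul_eq_nsmul ℂ, smul_add,
    smul_smul, hcoef, AN_add_eq_smul_conjSum k _ hn, add_sub_cancel_left]
  exact Submodule.smul_mem _ _ (Submodule.sum_mem _ fun π hπ =>
    conjSum_mul_conj_embFin_mem_spanBelow hGS hg hh hn hk (mem_filter.1 hπ).2)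

end Product

theorem AN_mul_AN_sub_top_term_mem_span_general
    {I X : Type*}
    (Ginf : Subgroup (Equiv.Perm (X ⊕ I × ℕ)))
    (hGS : ∀ τ : Equiv.Perm ℕ, {m : ℕ | τ m ≠ m}.Finite → embNat I X τ ∈ Ginf)
    (n k : ℕ) (g h : Equiv.Perm (X ⊕ I × ℕ))
    (hg : g ∈ Gset Ginf n) (hh : h ∈ Gset Ginf k) :
    (∀ θ θ' : Equiv.Perm ℕ,
      fixesFrom (n + k) θ → fixesFrom (n + k) θ' →
      (∀ i : ℕ, i < k → θ i = n + i) → (∀ i : ℕ, i < k → θ' i = n + i) →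
      g * (embNat I X θ * h * (embNat I X θ)⁻¹) ∈ Gset Ginf (n + k) ∧
      Kconj (n + k)
        (g * (embNat I X θ * h * (embNat I X θ)⁻¹))
        (g * (embNat I X θ' * h * (embNat I X θ')⁻¹)))
    ∧
    (∀ (N : ℕ) (θ : Equiv.Perm ℕ),
      fixesFrom (n + k) θ → (∀ i : ℕ, i < k → θ i = n + i) →
      AN I X N n g * AN I X N k h
          - AN I X N (n + k) (g * (embNat I X θ * h * (embNat I X θ)⁻¹))
        ∈ Submodule.span ℂ
            {x : MonoidAlgebra ℂ (Equiv.Perm (X ⊕ I × ℕ)) |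
              ∃ m : ℕ, m < n + k ∧ ∃ r ∈ Gset Ginf m, x = AN I X N m r}) := by
  refine ⟨fun θ θ' hθN _ hθ hθ' => ⟨?_, 1, fun _ _ => rfl, ?_⟩,
    fun N θ _ hθ => AN_mul_AN_sub_AN_mem_spanBelow hGS hg hh N hθ⟩
  · exact mul_embNat_conj_mem_Gset hGS hg hh hθN (fun j hj => by rw [hθ j hj]; omega) le_self_add
  · rw [embNat_one, one_mul, inv_one, mul_one,
      embNat_conj_eq_of_eqOn hh.2 fun j hj => (hθ j hj).trans (hθ' j hj).symm]

/-- Let `g ∈ G_n`, `h ∈ G_k`, and let `θ ∈ K_{n+k}` be any element whose underlying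
permutation of `ℕ` sends `i` to `n + i` for all `0 ≤ i < k`.  Then
(a) `g · θ h θ⁻¹ ∈ G_{n+k}` and its `K_{n+k}`-conjugacy class does not depend on the
choice of `θ`; and
(b) for every `N`, the difference `A_N[n,g] * A_N[k,h] − A_N[n+k, g · θ h θ⁻¹]` lies in
the complex linear span of the elements `A_N[m,r]` with `m ≤ n + k − 1` (i.e. `m < n+k`)
and `r ∈ G_m`. -/
theorem AN_mul_AN_sub_top_term_mem_span
    {I X : Type*} [Finite I] [Countable X]
    (Ginf : Subgroup (Equiv.Perm (X ⊕ I × ℕ)))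
    (hGfs : ∀ g ∈ Ginf, {v : X ⊕ I × ℕ | g v ≠ v}.Finite)
    (hGS : ∀ τ : Equiv.Perm ℕ, {m : ℕ | τ m ≠ m}.Finite → embNat I X τ ∈ Ginf)
    (n k : ℕ) (g h : Equiv.Perm (X ⊕ I × ℕ))
    (hg : g ∈ Gset Ginf n) (hh : h ∈ Gset Ginf k) :
    (∀ θ θ' : Equiv.Perm ℕ,
      fixesFrom (n + k) θ → fixesFrom (n + k) θ' →
      (∀ i : ℕ, i < k → θ i = n + i) → (∀ i : ℕ, i < k → θ' i = n + i) →
      g * (embNat I X θ * h * (embNat I X θ)⁻¹) ∈ Gset Ginf (n + k) ∧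
      Kconj (n + k)
        (g * (embNat I X θ * h * (embNat I X θ)⁻¹))
        (g * (embNat I X θ' * h * (embNat I X θ')⁻¹)))
    ∧
    (∀ (N : ℕ) (θ : Equiv.Perm ℕ),
      fixesFrom (n + k) θ → (∀ i : ℕ, i < k → θ i = n + i) →
      AN I X N n g * AN I X N k h
          - AN I X N (n + k) (g * (embNat I X θ * h * (embNat I X θ)⁻¹))
        ∈ Submodule.span ℂ
            {x : MonoidAlgebra ℂ (Equiv.Perm (X ⊕ I × ℕ)) |
              ∃ m : ℕ, m < n + k ∧ ∃ r ∈ Gset Ginf m, x = AN I X N m r}) :=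
  AN_mul_AN_sub_top_term_mem_span_general Ginf hGS n k g h hg hh

end
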